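/- Let φ be a positive DNF over a finite type V such that no term of φ is redundant and every v ∈ V occurs in some term of φ. Let P(φ) = Σ_{t ∈ φ} Π_{v ∈ t} X_v in MvPolynomial V (ZMod 2). Then for every family π = {V₁, …, Vₙ} (n ≥ 2) of pairwise disjoint nonempty subsets covering V: the boolean function of φ is ∅-decomposable with π if and only if there exist polynomials F₁, …, Fₙ in MvPolynomial V (ZMod 2) with P(φ) = F₁ * ⋯ * Fₙ and vars Fᵢ ⊆ Vᵢ for each i. (Thus ∅-decomposition of a positive DNF without redundant terms corresponds exactly to factorization of its associated multilinear boolean polynomial.) -/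

import Mathlib

open MvPolynomial

/-- A boolean function `f` on variables `W` depends only on the variables in `U`. -/
def DependsOnlyOn {W : Type*} (f : (W → Bool) → Bool) (U : Set W) : Prop :=
  ∀ x y : W → Bool, (∀ v ∈ U, x v = y v) → f x = f y

/-- `f` is ∅-decomposable with the partition `π = {Vs 0, …, Vs (n-1)}`. -/
def EmptyDecomposableWith {V : Type*} (f : (V → Bool) → Bool)
    {n : ℕ} (Vs : Fin n → Set V) : Prop :=
  2 ≤ n ∧ ∃ fs : Fin n → ((V → Bool) → Bool),
    (∀ x, f x = true ↔ ∀ i, fs i x = true) ∧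
    ∀ i, DependsOnlyOn (fs i) (Vs i)

/-- The boolean function of a positive DNF `φ`. -/
def evalDNF {V : Type*} (φ : Finset (Finset V)) (x : V → Bool) : Bool :=
  decide (∃ t ∈ φ, ∀ v ∈ t, x v = true)

section Aux

set_option linter.unusedSectionVars false
set_option maxHeartbeats 1000000

open Finset

variable {V : Type*} [Fintype V] [DecidableEq V]

noncomputable def ind (t : Finset V) : V →₀ ℕ := ∑ v ∈ t, Finsupp.single v 1

lemma ind_apply (t : Finset V) (v : V) : ind t v = if v ∈ t then 1 else 0 := by
  classical
  simp [ind, Finsupp.finset_sum_apply, Finsupp.single_apply, Finset.sum_ite_eq]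

lemma ind_support (t : Finset V) : (ind t).support = t := by
  ext v; simp [Finsupp.mem_support_iff, ind_apply]

lemma ind_inj : Function.Injective (ind (V := V)) := fun s t h => by
  rw [← ind_support s, ← ind_support t, h]

lemma mono_eq (t : Finset V) :
    (∏ v ∈ t, (X v : MvPolynomial V (ZMod 2))) = monomial (ind t) 1 := by
  classical
  induction t using Finset.induction_on with
  | empty => simp [ind]
  | @insert _ _ h ih =>
      rw [Finset.prod_insert h, ih, X, monomial_mul, one_mul, ind, ind,
        Finset.sum_insert h]

lemma coeff_P (φ : Finset (Finset V)) (d : V →₀ ℕ) :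
    coeff d (∑ t ∈ φ, ∏ v ∈ t, (X v : MvPolynomial V (ZMod 2))) =
      ∑ t ∈ φ, if ind t = d then 1 else 0 := by
  simp [mono_eq, coeff_sum, coeff_monomial]

lemma coeff_P_ind (φ : Finset (Finset V)) (t : Finset V) (ht : t ∈ φ) :
    coeff (ind t) (∑ t ∈ φ, ∏ v ∈ t, (X v : MvPolynomial V (ZMod 2))) = 1 := by
  rw [coeff_P]
  rw [Finset.sum_eq_single t (fun t' _ hne => if_neg (fun h => hne (ind_inj h)))
    (fun h => absurd ht h)]
  simp

lemma mem_supp_P (φ : Finset (Finset V)) (d : V →₀ ℕ)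
    (hd : d ∈ (∑ t ∈ φ, ∏ v ∈ t, (X v : MvPolynomial V (ZMod 2))).support) :
    ∃ t ∈ φ, d = ind t := by
  rw [mem_support_iff, coeff_P] at hd
  by_contra h
  push_neg at h
  exact hd (Finset.sum_eq_zero fun t ht => if_neg (fun e => h t ht e.symm))

lemma supp_sub_vars {p : MvPolynomial V (ZMod 2)} {d : V →₀ ℕ} (hd : d ∈ p.support) :
    ↑d.support ⊆ (↑p.vars : Set V) := fun v hv =>
  (mem_vars v).mpr ⟨d, hd, hv⟩

lemma coeff_mul_disjoint {F G : MvPolynomial V (ZMod 2)} {A B : Set V}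
    (hAB : Disjoint A B) (hF : ↑F.vars ⊆ A) (hG : ↑G.vars ⊆ B)
    {a b : V →₀ ℕ} (ha : a ∈ F.support) (hb : b ∈ G.support) :
    coeff (a + b) (F * G) = coeff a F * coeff b G := by
  rw [coeff_mul]
  apply Finset.sum_eq_single (a, b)
  · rintro ⟨a', b'⟩ hmem hne
    by_contra hc
    have ha' : a' ∈ F.support := by
      rw [mem_support_iff]; intro h; simp [h] at hc
    have hb' : b' ∈ G.support := by
      rw [mem_support_iff]; intro h; simp [h] at hc
    have hsum : a' + b' = a + b := Finset.HasAntidiagonal.mem_antidiagonal.mp hmem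
    have haa : a' = a := by
      ext v
      by_cases hv : v ∈ A
      · have h1 : b v = 0 := by
          by_contra h
          exact absurd (hG (supp_sub_vars hb (Finsupp.mem_support_iff.mpr h)))
            (Set.disjoint_left.mp hAB hv)
        have h2 : b' v = 0 := by
          by_contra h
          exact absurd (hG (supp_sub_vars hb' (Finsupp.mem_support_iff.mpr h)))
            (Set.disjoint_left.mp hAB hv)
        have := congrArg (fun f : V →₀ ℕ => f v) hsum
        simpa [h1, h2] using this
      · have h1 : a v = 0 := by
          by_contra h
          exact hv (hF (supp_sub_vars ha (Finsupp.mem_support_iff.mpr h)))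
        have h2 : a' v = 0 := by
          by_contra h
          exact hv (hF (supp_sub_vars ha' (Finsupp.mem_support_iff.mpr h)))
        rw [h1, h2]
    have hbb : b' = b := by
      ext v
      have h3 := congrArg (fun f : V →₀ ℕ => f v) hsum
      have h4 := congrArg (fun f : V →₀ ℕ => f v) haa
      simp only [Finsupp.add_apply] at h3
      omega
    exact hne (by rw [haa, hbb])
  · intro h; simp [Finset.HasAntidiagonal.mem_antidiagonal] at h

lemma coeff_prod_disjoint {ι : Type*} [DecidableEq ι] {A : ι → Set V}
    (hdisj : ∀ i j, i ≠ j → Disjoint (A i) (A j))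
    {F : ι → MvPolynomial V (ZMod 2)} (hF : ∀ i, ↑(F i).vars ⊆ A i)
    (s : Finset ι) (c : ι → (V →₀ ℕ)) (hc : ∀ i ∈ s, c i ∈ (F i).support) :
    coeff (∑ i ∈ s, c i) (∏ i ∈ s, F i) = ∏ i ∈ s, coeff (c i) (F i) := by
  classical
  induction s using Finset.induction_on with
  | empty => simp
  | @insert a s hns ih =>
      have hvarsprod : ↑(∏ i ∈ s, F i).vars ⊆ ⋃ i ∈ s, A i := by
        intro v hv
        obtain ⟨i, hi, hvi⟩ := Finset.mem_biUnion.mp (vars_prod F hv)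
        exact Set.mem_biUnion hi (hF i hvi)
      have hdisj2 : Disjoint (A a) (⋃ i ∈ s, A i) := by
        rw [Set.disjoint_iUnion_right]
        intro i
        rw [Set.disjoint_iUnion_right]
        intro hi
        exact hdisj a i (fun h => hns (h ▸ hi))
      have hprodsupp : (∑ i ∈ s, c i) ∈ (∏ i ∈ s, F i).support := by
        rw [mem_support_iff, ih (fun i hi => hc i (Finset.mem_insert_of_mem hi))]
        exact Finset.prod_ne_zero_iff.mpr
          (fun i hi => mem_support_iff.mp (hc i (Finset.mem_insert_of_mem hi)))
      rw [Finset.sum_insert hns, Finset.prod_insert hns, Finset.prod_insert hns,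
        coeff_mul_disjoint hdisj2 (hF a) hvarsprod
          (hc a (Finset.mem_insert_self a s)) hprodsupp,
        ih (fun i hi => hc i (Finset.mem_insert_of_mem hi))]

lemma mem_support_prod {ι : Type*} [DecidableEq ι]
    {F : ι → MvPolynomial V (ZMod 2)}
    (s : Finset ι) (d : V →₀ ℕ) (hd : d ∈ (∏ i ∈ s, F i).support) :
    ∃ c : ι → (V →₀ ℕ), (∀ i ∈ s, c i ∈ (F i).support) ∧ d = ∑ i ∈ s, c i := by
  classical
  induction s using Finset.induction_on generalizing d with
  | empty =>
      refine ⟨fun _ => 0, by simp, ?_⟩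
      simp only [Finset.prod_empty] at hd
      have : d = 0 := by
        by_contra h
        rw [mem_support_iff, coeff_one, if_neg (fun e => h e.symm)] at hd
        exact hd rfl
      simp [this]
  | @insert a s hns ih =>
      rw [Finset.prod_insert hns] at hd
      obtain ⟨d1, hd1, d2, hd2, hsum⟩ := Finset.mem_add.mp (support_mul _ _ hd)
      obtain ⟨c, hcs, hceq⟩ := ih d2 hd2
      refine ⟨Function.update c a d1, ?_, ?_⟩
      · intro i hi
        rcases Finset.mem_insert.mp hi with h | h
        · subst h; simpa using hd1
        · rw [Function.update_of_ne (fun e : i = a => hns (e ▸ h))]; exact hcs i h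
      · rw [Finset.sum_insert hns, Function.update_self, ← hsum, hceq]
        congr 1
        exact Finset.sum_congr rfl fun i hi => by
          rw [Function.update_of_ne (fun e : i = a => hns (e ▸ hi))]

/-- characteristic function of a finset -/
def chi (s : Finset V) : V → Bool := fun v => decide (v ∈ s)

lemma evalDNF_eq_true_iff (φ : Finset (Finset V)) (x : V → Bool) :
    evalDNF φ x = true ↔ ∃ t ∈ φ, ∀ v ∈ t, x v = true := by
  simp [evalDNF]

lemma evalDNF_chi (φ : Finset (Finset V)) (s : Finset V) :
    evalDNF φ (chi s) = true ↔ ∃ t ∈ φ, t ⊆ s := by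
  simp [evalDNF, chi, Finset.subset_iff]

open scoped Classical in
/-- f with variables outside A fixed to true -/
noncomputable def gFun (φ : Finset (Finset V)) (A : Set V) (x : V → Bool) : Bool :=
  evalDNF φ (fun v => if v ∈ A then x v else true)

lemma gFun_dep (φ : Finset (Finset V)) (A : Set V) : DependsOnlyOn (gFun φ A) A := by
  intro x y h
  unfold gFun
  congr 1
  funext v
  by_cases hv : v ∈ A
  · simp [hv, h v hv]
  · simp [hv]

/-- minimal true sets of gFun -/
def MinP (φ : Finset (Finset V)) (A : Set V) (s : Finset V) : Prop :=
  gFun φ A (chi s) = true ∧ ∀ s' ⊆ s, gFun φ A (chi s') = true → s' = s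

lemma MinP_subset {φ : Finset (Finset V)} {A : Set V} {s : Finset V}
    (hMin : MinP φ A s) : ↑s ⊆ A := by
  classical
  intro v hv
  by_contra hvA
  have h1 : gFun φ A (chi (s.filter (· ∈ A))) = gFun φ A (chi s) :=
    gFun_dep φ A _ _ (fun w hw => by simp [chi, hw])
  have h2 := hMin.2 _ (Finset.filter_subset _ _) (h1.trans hMin.1)
  rw [← h2] at hv
  exact hvA (Finset.mem_filter.mp hv).2

end Aux

section Directions
set_option linter.unusedSectionVars false
set_option maxHeartbeats 1000000
variable {V : Type*} [Fintype V] [DecidableEq V]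

lemma backward_dir (φ : Finset (Finset V)) {n : ℕ} (hn : 2 ≤ n) (Vs : Fin n → Set V)
    (hdisj : ∀ i j, i ≠ j → Disjoint (Vs i) (Vs j))
    (Fs : Fin n → MvPolynomial V (ZMod 2))
    (hPeq : (∑ t ∈ φ, ∏ v ∈ t, (X v : MvPolynomial V (ZMod 2))) = ∏ i, Fs i)
    (hFvars : ∀ i, ↑(Fs i).vars ⊆ Vs i) :
    EmptyDecomposableWith (evalDNF φ) Vs := by
  classical
  refine ⟨hn, fun i x => decide (∃ d ∈ (Fs i).support, ∀ v ∈ d.support, x v = true),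
    ?_, ?_⟩
  · intro x
    constructor
    · intro hx
      rw [evalDNF_eq_true_iff] at hx
      obtain ⟨t, ht, hxt⟩ := hx
      have h1 : ind t ∈ (∏ i, Fs i).support := by
        rw [← hPeq, mem_support_iff, coeff_P_ind φ t ht]; exact one_ne_zero
      obtain ⟨c, hc, hceq⟩ := mem_support_prod Finset.univ (ind t) h1
      intro i
      rw [decide_eq_true_eq]
      refine ⟨c i, hc i (Finset.mem_univ i), fun v hv => ?_⟩
      apply hxt
      have h2 : c i v ≠ 0 := Finsupp.mem_support_iff.mp hv
      have h3 : ind t v ≠ 0 := by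
        rw [hceq, Finsupp.finset_sum_apply]
        intro h0
        exact h2 (Finset.sum_eq_zero_iff.mp h0 i (Finset.mem_univ i))
      by_contra hvt
      rw [ind_apply, if_neg hvt] at h3
      exact h3 rfl
    · intro hx
      have hx' : ∀ i, ∃ d ∈ (Fs i).support, ∀ v ∈ d.support, x v = true := fun i => by
        have := hx i; rwa [decide_eq_true_eq] at this
      choose d hd hdx using hx'
      have h1 : coeff (∑ i, d i) (∏ i, Fs i) = ∏ i, coeff (d i) (Fs i) :=
        coeff_prod_disjoint hdisj hFvars Finset.univ d (fun i _ => hd i)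
      have h2 : (∑ i, d i) ∈
          (∑ t ∈ φ, ∏ v ∈ t, (X v : MvPolynomial V (ZMod 2))).support := by
        rw [hPeq, mem_support_iff, h1]
        exact Finset.prod_ne_zero_iff.mpr fun i _ => mem_support_iff.mp (hd i)
      obtain ⟨t, ht, hteq⟩ := mem_supp_P φ _ h2
      rw [evalDNF_eq_true_iff]
      refine ⟨t, ht, fun v hv => ?_⟩
      have h3 : ind t v ≠ 0 := by rw [ind_apply, if_pos hv]; exact one_ne_zero
      rw [← hteq, Finsupp.finset_sum_apply] at h3
      by_contra hxv
      apply h3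
      apply Finset.sum_eq_zero
      intro i _
      by_contra h4
      exact hxv (hdx i v (Finsupp.mem_support_iff.mpr h4))
  · intro i x y hxy
    have key : ∀ d ∈ (Fs i).support, ∀ v ∈ d.support, x v = y v := fun dd hdd v hv =>
      hxy v (hFvars i (supp_sub_vars hdd hv))
    rw [decide_eq_decide]
    constructor
    · rintro ⟨dd, hdd, h⟩
      exact ⟨dd, hdd, fun v hv => (key dd hdd v hv) ▸ h v hv⟩
    · rintro ⟨dd, hdd, h⟩
      exact ⟨dd, hdd, fun v hv => (key dd hdd v hv).symm ▸ h v hv⟩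

end Directions

section Forward
set_option linter.unusedSectionVars false
set_option maxHeartbeats 1000000
variable {V : Type*} [Fintype V] [DecidableEq V]

lemma gFun_decomp (φ : Finset (Finset V)) (hφ : φ.Nonempty) {n : ℕ} (Vs : Fin n → Set V)
    (hdisj : ∀ i j, i ≠ j → Disjoint (Vs i) (Vs j))
    (fs : Fin n → ((V → Bool) → Bool))
    (hiff : ∀ x, evalDNF φ x = true ↔ ∀ i, fs i x = true)
    (hdep : ∀ i, DependsOnlyOn (fs i) (Vs i)) :
    ∀ x, evalDNF φ x = true ↔ ∀ i, gFun φ (Vs i) x = true := by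
  have htrue : evalDNF φ (fun _ => true) = true := by
    rw [evalDNF_eq_true_iff]; obtain ⟨t, ht⟩ := hφ; exact ⟨t, ht, fun _ _ => rfl⟩
  have hfs_true : ∀ j, fs j (fun _ => true) = true := (hiff _).mp htrue
  have key : ∀ i x, (gFun φ (Vs i) x = true ↔ fs i x = true) := by
    intro i x
    unfold gFun
    rw [hiff]
    constructor
    · intro h
      have := h i
      rwa [hdep i _ x (fun v hv => if_pos hv)] at this
    · intro h j
      by_cases hji : j = i
      · subst hji; rwa [hdep j x _ (fun v hv => (if_pos hv).symm)] at h
      · rw [hdep j _ (fun _ => true)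
          (fun v hv => if_neg (fun hvi => Set.disjoint_left.mp (hdisj j i hji) hv hvi))]
        exact hfs_true j
  intro x
  rw [hiff]
  exact forall_congr' fun i => (key i x).symm

lemma mem_phi_iff_minimal (φ : Finset (Finset V))
    (hred : ∀ t ∈ φ, ∀ t' ∈ φ, t' ⊆ t → t' = t) (t : Finset V) :
    t ∈ φ ↔ (evalDNF φ (chi t) = true ∧
      ∀ s ⊆ t, evalDNF φ (chi s) = true → s = t) := by
  constructor
  · intro ht
    refine ⟨(evalDNF_chi φ t).mpr ⟨t, ht, subset_rfl⟩, fun s hs hfs => ?_⟩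
    obtain ⟨t', ht', ht's⟩ := (evalDNF_chi φ s).mp hfs
    have he : t' = t := hred t ht t' ht' (ht's.trans hs)
    exact subset_antisymm hs (he ▸ ht's)
  · rintro ⟨h1, h2⟩
    obtain ⟨t', ht', ht't⟩ := (evalDNF_chi φ t).mp h1
    have he := h2 t' ht't ((evalDNF_chi φ t').mpr ⟨t', ht', subset_rfl⟩)
    rwa [← he]

lemma minimal_iff_union (φ : Finset (Finset V)) {n : ℕ} (Vs : Fin n → Set V)
    (hdisj : ∀ i j, i ≠ j → Disjoint (Vs i) (Vs j))
    (hcover : (⋃ i, Vs i) = Set.univ)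
    (hg : ∀ x, evalDNF φ x = true ↔ ∀ i, gFun φ (Vs i) x = true) (t : Finset V) :
    (evalDNF φ (chi t) = true ∧ ∀ s ⊆ t, evalDNF φ (chi s) = true → s = t) ↔
      ∃ c : Fin n → Finset V, (∀ i, MinP φ (Vs i) (c i)) ∧
        t = Finset.univ.biUnion c := by
  classical
  constructor
  · rintro ⟨h1, h2⟩
    refine ⟨fun i => t.filter (· ∈ Vs i), fun i => ?_, ?_⟩
    · constructor
      · have hag : gFun φ (Vs i) (chi (t.filter (· ∈ Vs i))) = gFun φ (Vs i) (chi t) :=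
          gFun_dep φ (Vs i) _ _ (fun v hv => by
            simp only [chi, decide_eq_decide, Finset.mem_filter]
            exact ⟨fun h => h.1, fun h => ⟨h, hv⟩⟩)
        rw [hag]
        exact (hg (chi t)).mp h1 i
      · intro s hs hgs
        have hsub : s ⊆ t := hs.trans (Finset.filter_subset _ _)
        set t' := s ∪ (t \ t.filter (· ∈ Vs i)) with ht'def
        have ht't : t' ⊆ t := Finset.union_subset hsub (Finset.sdiff_subset)
        have hft' : evalDNF φ (chi t') = true := by
          rw [hg]
          intro j
          by_cases hji : j = i
          · subst hji
            have hag : gFun φ (Vs j) (chi t') = gFun φ (Vs j) (chi s) :=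
              gFun_dep φ (Vs j) _ _ (fun v hv => by
                simp only [chi, decide_eq_decide, ht'def, Finset.mem_union,
                  Finset.mem_sdiff, Finset.mem_filter]
                constructor
                · rintro (h | ⟨hvt, hnf⟩)
                  · exact h
                  · exact absurd ⟨hvt, hv⟩ hnf
                · exact fun h => Or.inl h)
            rw [hag]; exact hgs
          · have hvnotin : ∀ v ∈ Vs j, v ∉ Vs i :=
              fun v hv => Set.disjoint_left.mp (hdisj j i hji) hv
            have hag : gFun φ (Vs j) (chi t') = gFun φ (Vs j) (chi t) :=
              gFun_dep φ (Vs j) _ _ (fun v hv => by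
                simp only [chi, decide_eq_decide, ht'def, Finset.mem_union,
                  Finset.mem_sdiff, Finset.mem_filter]
                constructor
                · rintro (h | ⟨hvt, _⟩)
                  · exact absurd ((Finset.mem_filter.mp (hs h)).2) (hvnotin v hv)
                  · exact hvt
                · exact fun h => Or.inr ⟨h, fun hf => hvnotin v hv hf.2⟩)
            rw [hag]
            exact (hg (chi t)).mp h1 j
        have heq : t' = t := h2 t' ht't hft'
        apply subset_antisymm hs
        intro v hv
        have hvt : v ∈ t := (Finset.filter_subset _ _) hv
        rw [← heq] at hvt
        rcases Finset.mem_union.mp hvt with h | h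
        · exact h
        · exact absurd hv (Finset.mem_sdiff.mp h).2
    · ext v
      simp only [Finset.mem_biUnion, Finset.mem_univ, true_and, Finset.mem_filter]
      constructor
      · intro hv
        have : v ∈ (⋃ i, Vs i) := hcover ▸ Set.mem_univ v
        obtain ⟨i, hi⟩ := Set.mem_iUnion.mp this
        exact ⟨i, hv, hi⟩
      · rintro ⟨i, hv, -⟩; exact hv
  · rintro ⟨c, hc, rfl⟩
    have hcVs : ∀ i, ↑(c i) ⊆ Vs i := fun i => MinP_subset (hc i)
    have hmem : ∀ (v : V) (i : Fin n), v ∈ Vs i →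
        (v ∈ Finset.univ.biUnion c ↔ v ∈ c i) := by
      intro v i hv
      simp only [Finset.mem_biUnion, Finset.mem_univ, true_and]
      constructor
      · rintro ⟨j, hj⟩
        by_cases hji : j = i
        · exact hji ▸ hj
        · exact absurd hv (Set.disjoint_left.mp (hdisj j i hji) (hcVs j hj))
      · exact fun h => ⟨i, h⟩
    constructor
    · rw [hg]
      intro i
      have hag : gFun φ (Vs i) (chi (Finset.univ.biUnion c)) =
          gFun φ (Vs i) (chi (c i)) :=
        gFun_dep φ (Vs i) _ _ (fun v hv => by
          simp only [chi, decide_eq_decide]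
          exact hmem v i hv)
      rw [hag]
      exact (hc i).1
    · intro s hs hfs
      have hgs : ∀ i, gFun φ (Vs i) (chi s) = true := (hg _).mp hfs
      have hsc : ∀ i, s.filter (· ∈ Vs i) = c i := by
        intro i
        apply (hc i).2
        · intro v hv
          obtain ⟨hvs, hvVs⟩ := Finset.mem_filter.mp hv
          exact (hmem v i hvVs).mp (hs hvs)
        · have hag : gFun φ (Vs i) (chi (s.filter (· ∈ Vs i))) =
              gFun φ (Vs i) (chi s) :=
            gFun_dep φ (Vs i) _ _ (fun v hv => by
              simp only [chi, decide_eq_decide, Finset.mem_filter]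
              exact ⟨fun h => h.1, fun h => ⟨h, hv⟩⟩)
          rw [hag]
          exact hgs i
      apply Finset.Subset.antisymm hs
      intro v hv
      obtain ⟨i, -, hvi⟩ := Finset.mem_biUnion.mp hv
      rw [← hsc i] at hvi
      exact (Finset.mem_filter.mp hvi).1

end Forward

section Main
set_option linter.unusedSectionVars false
set_option maxHeartbeats 1000000
variable {V : Type*} [Fintype V] [DecidableEq V]

lemma forward_dir (φ : Finset (Finset V)) (hφ : φ.Nonempty)
    (hred : ∀ t ∈ φ, ∀ t' ∈ φ, t' ⊆ t → t' = t)
    {n : ℕ} (Vs : Fin n → Set V)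
    (hdisj : ∀ i j, i ≠ j → Disjoint (Vs i) (Vs j))
    (hcover : (⋃ i, Vs i) = Set.univ)
    (h : EmptyDecomposableWith (evalDNF φ) Vs) :
    ∃ Fs : Fin n → MvPolynomial V (ZMod 2),
      (∑ t ∈ φ, ∏ v ∈ t, (X v : MvPolynomial V (ZMod 2))) = ∏ i, Fs i ∧
      ∀ i, ↑(Fs i).vars ⊆ Vs i := by
  classical
  obtain ⟨-, fs, hiff, hdep⟩ := h
  have hg := gFun_decomp φ hφ Vs hdisj fs hiff hdep
  set S : Fin n → Finset (Finset V) :=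
    fun i => Finset.univ.filter (fun s => MinP φ (Vs i) s) with hS
  have hSmem : ∀ i s, s ∈ S i ↔ MinP φ (Vs i) s := fun i s => by simp [hS]
  refine ⟨fun i => ∑ s ∈ S i, ∏ v ∈ s, X v, ?_, ?_⟩
  · have hdisjc : ∀ c ∈ Fintype.piFinset S,
        Set.PairwiseDisjoint (↑(Finset.univ : Finset (Fin n))) c := by
      intro c hc i _ j _ hij
      have hci := MinP_subset ((hSmem i (c i)).mp (Fintype.mem_piFinset.mp hc i))
      have hcj := MinP_subset ((hSmem j (c j)).mp (Fintype.mem_piFinset.mp hc j))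
      exact Finset.disjoint_left.mpr
        (fun v hv hvj => Set.disjoint_left.mp (hdisj i j hij) (hci hv) (hcj hvj))
    have hstep : ∀ c ∈ Fintype.piFinset S,
        (∏ i, ∏ v ∈ c i, (X v : MvPolynomial V (ZMod 2))) =
          ∏ v ∈ Finset.univ.biUnion c, X v := fun c hc =>
      (Finset.prod_biUnion (hdisjc c hc)).symm
    have hinj : ∀ c ∈ Fintype.piFinset S, ∀ c' ∈ Fintype.piFinset S,
        Finset.univ.biUnion c = Finset.univ.biUnion c' → c = c' := by
      intro c hc c' hc' he
      have hsub : ∀ (c : Fin n → Finset V), c ∈ Fintype.piFinset S →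
          ∀ i, ↑(c i) ⊆ Vs i := fun c hc i =>
        MinP_subset ((hSmem i (c i)).mp (Fintype.mem_piFinset.mp hc i))
      have haux : ∀ (c c' : Fin n → Finset V), c ∈ Fintype.piFinset S →
          c' ∈ Fintype.piFinset S → Finset.univ.biUnion c = Finset.univ.biUnion c' →
          ∀ i, c i ⊆ c' i := by
        intro c c' hc hc' he i v hv
        have h1 : v ∈ Finset.univ.biUnion c' :=
          he ▸ (Finset.mem_biUnion.mpr ⟨i, Finset.mem_univ i, hv⟩)
        obtain ⟨j, -, hj⟩ := Finset.mem_biUnion.mp h1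
        by_cases hji : j = i
        · exact hji ▸ hj
        · exact absurd (hsub c hc i hv)
            (Set.disjoint_left.mp (hdisj j i hji) (hsub c' hc' j hj))
      funext i
      exact subset_antisymm (haux c c' hc hc' he i) (haux c' c hc' hc he.symm i)
    have himg : (Fintype.piFinset S).image (fun c => Finset.univ.biUnion c) = φ := by
      ext t
      rw [Finset.mem_image, mem_phi_iff_minimal φ hred t,
        minimal_iff_union φ Vs hdisj hcover hg t]
      constructor
      · rintro ⟨c, hc, he⟩
        exact ⟨c, fun i => (hSmem i (c i)).mp (Fintype.mem_piFinset.mp hc i), he.symm⟩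
      · rintro ⟨c, hc, he⟩
        exact ⟨c, Fintype.mem_piFinset.mpr (fun i => (hSmem i (c i)).mpr (hc i)), he.symm⟩
    symm
    rw [Finset.prod_univ_sum, Finset.sum_congr rfl hstep, ← himg,
      Finset.sum_image hinj]
  · intro i v hv
    obtain ⟨s, hsS, hvs⟩ := Finset.mem_biUnion.mp (vars_sum_subset _ _ hv)
    rw [mono_eq, vars_monomial one_ne_zero, ind_support] at hvs
    exact MinP_subset ((hSmem i s).mp hsS) hvs

end Main

/-- ∅-decomposition of a positive DNF without redundant terms, in which every
variable occurs, corresponds exactly to factorization of its associated multilinear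
boolean polynomial `P(φ) = Σ_{t ∈ φ} Π_{v ∈ t} X_v` over `ZMod 2`. -/
theorem empty_decomposition_iff_polynomial_factorization {V : Type*}
    [Fintype V] [DecidableEq V]
    (φ : Finset (Finset V)) (hφ : φ.Nonempty)
    (hred : ∀ t ∈ φ, ∀ t' ∈ φ, t' ⊆ t → t' = t)
    (hvars : ∀ v : V, ∃ t ∈ φ, v ∈ t)
    {n : ℕ} (hn : 2 ≤ n) (Vs : Fin n → Set V)
    (hdisj : ∀ i j, i ≠ j → Disjoint (Vs i) (Vs j))
    (hne : ∀ i, (Vs i).Nonempty)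
    (hcover : (⋃ i, Vs i) = Set.univ) :
    EmptyDecomposableWith (evalDNF φ) Vs ↔
      ∃ Fs : Fin n → MvPolynomial V (ZMod 2),
        (∑ t ∈ φ, ∏ v ∈ t, (X v : MvPolynomial V (ZMod 2))) = ∏ i, Fs i ∧
        ∀ i, ↑(Fs i).vars ⊆ Vs i := by
  constructor
  · exact forward_dir φ hφ hred Vs hdisj hcover
  · rintro ⟨Fs, hPeq, hFvars⟩
    exact backward_dir φ hn Vs hdisj Fs hPeq hFvars
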